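/- Let P be a nonempty countable family of probability distributions on ℕ, each with all components positive. Then BS(P) = ⋂_{p ∈ P} BS(p) is of second Baire category (i.e., not meagre) in S, where S carries the subspace topology induced by the ℓ¹-norm. -/

import Mathlib

/-- The set of probability distributions on `ℕ`, as a subset of the Banach space `ℓ¹`. -/
def S : Set (lp (fun _ : ℕ => ℝ) 1) :=
  {q | (∀ i, 0 ≤ q i) ∧ HasSum (fun i => q i) 1}

/-- The Bayes blind spot of `p`, as a subset of `S` (with its ℓ¹-subspace topology). -/
def BS (p : ℕ → ℝ) : Set S := {q | Function.Injective fun i => q.1 i / p i}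

/-!
`S` is closed in `ℓ¹`, hence a nonempty complete metric space and so a Baire space; it therefore
suffices to show that each `BS p` is residual, as residual sets are closed under countable
intersections. The complement of `BS p` is covered by the countably many sets
`{q | q i * p j = q j * p i}`, `i ≠ j`, each the zero set in `S` of a continuous linear functional
that is nonzero at the point mass `δᵢ`. Such a zero set is closed, and by convexity of `S` every
point `q` of it is a limit of the points `q + t (δᵢ - q) ∈ S`, `t ↓ 0`, which lie outside it;
so it is nowhere dense.
-/

open Set Filter Topology
open scoped lp

theorem isNowhereDense_setOf_apply_eq_zero {E : Type*} [AddCommGroup E] [Module ℝ E]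
    [TopologicalSpace E] [ContinuousAdd E] [ContinuousSMul ℝ E] {s : Set E} (hs : Convex ℝ s)
    (f : E →L[ℝ] ℝ) {x : E} (hx : x ∈ s) (hfx : f x ≠ 0) :
    IsNowhereDense {q : s | f q = 0} := by
  have hclosed : IsClosed {q : s | f q = 0} :=
    isClosed_eq (f.continuous.comp continuous_subtype_val) continuous_const
  refine hclosed.isNowhereDense_iff.2 (eq_empty_iff_forall_notMem.2 fun q hq => ?_)
  set t : ℕ → ℝ := fun n => 1 / (n + 1)
  have ht_pos : ∀ n, 0 < t n := fun n => by positivity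
  have ht_le : ∀ n, t n ≤ 1 := fun n =>
    div_le_one_of_le₀ (by linarith [n.cast_nonneg (α := ℝ)]) (by positivity)
  let r : ℕ → s := fun n => ⟨q + t n • (x - q), hs.add_smul_sub_mem q.2 hx ⟨(ht_pos n).le, ht_le n⟩⟩
  have hr : Tendsto r atTop (𝓝 q) := by
    refine tendsto_subtype_rng.2 ?_
    have hcont : Continuous fun c : ℝ => (q : E) + c • (x - q) := by fun_prop
    have := (hcont.tendsto 0).comp tendsto_one_div_add_atTop_nhds_zero_nat
    rw [zero_smul, add_zero] at this
    exact this
  obtain ⟨n, hn⟩ := (hr.eventually (mem_interior_iff_mem_nhds.1 hq)).exists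
  have hfq : f q = 0 := interior_subset (s := {q : s | f q = 0}) hq
  have : f (r n) = t n * f x := by
    simp [r, map_sub, hfq]
  exact mul_ne_zero (ht_pos n).ne' hfx (this ▸ hn)

theorem lp.summable_of_one {α E : Type*} [NormedAddCommGroup E] [CompleteSpace E]
    (q : ℓ¹(α, E)) : Summable fun i => q i :=
  .of_norm (by simpa using q.2.summable (p := 1) (by norm_num))

theorem convex_S : Convex ℝ S := by
  rintro q ⟨hq_nonneg, hq_sum⟩ r ⟨hr_nonneg, hr_sum⟩ a b ha hb hab
  simp only [S, mem_ofPred_eq, lp.coeFn_add, lp.coeFn_smul, Pi.add_apply, Pi.smul_apply,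
    smul_eq_mul]
  refine ⟨fun i => by positivity [hq_nonneg i, hr_nonneg i], ?_⟩
  simpa [hab] using (hq_sum.mul_left a).add (hr_sum.mul_left b)

theorem isClosed_S : IsClosed S := by
  have : S = (⋂ i, {q | 0 ≤ q i}) ∩ lp.tsumCLM ℝ ℕ ℝ ⁻¹' {1} := by
    ext q
    simp [S, (lp.summable_of_one q).hasSum_iff]
  rw [this]
  exact .inter (isClosed_iInter fun i => isClosed_le continuous_const
    (lp.evalCLM ℝ (fun _ : ℕ => ℝ) 1 i).continuous)
    (isClosed_singleton.preimage (lp.tsumCLM ℝ ℕ ℝ).continuous)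

theorem single_mem_S (i : ℕ) : lp.single 1 i (1 : ℝ) ∈ S :=
  ⟨fun j => by by_cases h : j = i <;> simp [h], hasSum_pi_single i 1⟩

instance : Nonempty S := ⟨⟨_, single_mem_S 0⟩⟩

instance : BaireSpace S :=
  have : CompleteSpace S := isClosed_S.completeSpace_coe
  inferInstance

noncomputable def crossDiff (p : ℕ → ℝ) (i j : ℕ) : ℓ¹(ℕ, ℝ) →L[ℝ] ℝ :=
  p j • lp.evalCLM ℝ (fun _ : ℕ => ℝ) 1 i - p i • lp.evalCLM ℝ (fun _ : ℕ => ℝ) 1 j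

theorem crossDiff_apply (p : ℕ → ℝ) (i j : ℕ) (q : ℓ¹(ℕ, ℝ)) :
    crossDiff p i j q = q i * p j - q j * p i := by
  simp [crossDiff, lp.evalCLM, mul_comm]

theorem compl_BS_subset {p : ℕ → ℝ} (hp : ∀ i, p i ≠ 0) :
    (BS p)ᶜ ⊆ ⋃ ij ∈ {ij : ℕ × ℕ | ij.1 ≠ ij.2}, {q : S | crossDiff p ij.1 ij.2 q = 0} := by
  intro q hq
  obtain ⟨i, j, hdiv, hij⟩ := Function.not_injective_iff.1 hq
  refine mem_biUnion (x := (i, j)) hij ?_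
  simpa [crossDiff_apply, sub_eq_zero] using (div_eq_div_iff (hp i) (hp j)).1 hdiv

theorem isNowhereDense_crossDiff_eq_zero {p : ℕ → ℝ} (hp : ∀ i, p i ≠ 0) {i j : ℕ}
    (hij : i ≠ j) : IsNowhereDense {q : S | crossDiff p i j q = 0} :=
  isNowhereDense_setOf_apply_eq_zero convex_S _ (single_mem_S i)
    (by simpa [crossDiff_apply, hij.symm] using hp j)

theorem BS_mem_residual {p : ℕ → ℝ} (hp : ∀ i, p i ≠ 0) : BS p ∈ residual S := by
  rw [← compl_compl (BS p)]
  exact (isMeagre_biUnion (to_countable _) fun ij hij =>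
    (isNowhereDense_crossDiff_eq_zero hp hij).isMeagre).mono (compl_BS_subset hp)

theorem bayes_blind_spot_inter_stmt11_general (P : Set (ℕ → ℝ))
    (hPcount : P.Countable)
    (hPpos : ∀ p ∈ P, ∀ i, 0 < p i) :
    ¬ IsMeagre (⋂ p ∈ P, BS p) :=
  not_isMeagre_of_mem_residual <|
    (countable_bInter_mem hPcount).2 fun p hp => BS_mem_residual fun i => (hPpos p hp i).ne'

/-- For a nonempty countable family `P` of probability distributions
on `ℕ`, each with all components positive, `BS(P) = ⋂_{p ∈ P} BS(p)` is of second Baire category (not meagre) in `S`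
for the ℓ¹-subspace topology. -/
theorem bayes_blind_spot_inter_stmt11 (P : Set (ℕ → ℝ))
    (hPne : P.Nonempty) (hPcount : P.Countable)
    (hPpos : ∀ p ∈ P, ∀ i, 0 < p i) (hPsum : ∀ p ∈ P, HasSum p 1) :
    ¬ IsMeagre (⋂ p ∈ P, BS p) :=
  bayes_blind_spot_inter_stmt11_general P hPcount hPpos
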